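/- For a triangular input array W = (w_{ij} : i,j ≥ 1, i+j−1 ≤ n) of positive reals, the geometric PNG output H = gPNG(W) satisfies, for every (i,j) with i+j = n+1, h_{ij} = Σ_{π ∈ Π_{ij}} Π_{(k,l)∈π} w_{kl}, where Π_{ij} is the set of down-right lattice paths from (1,1) to (i,j). In particular, the anti-diagonal entries of the gPNG array are the point-to-point polymer partition functions. -/

import Mathlib

/-!
At time `t` the moves `ρ^{t-k}_{1+k}` touch only cells of the antidiagonals of the parity of
`t + 1` with `p + q ≤ t + 1`; hence each cell `(p, q)` with `p + q = t + 1` is changed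
exactly once, by `l_{pq}`, while it still holds `w_{pq}` and its neighbours `(p-1, q)`, `(p, q-1)`
still hold the output of time `t - 1`. By induction these neighbours are `Z_{p-1,q}` and
`Z_{p,q-1}`, so the new entry is `w_{pq} (Z_{p-1,q} + Z_{p,q-1})` (with the obvious changes on the
boundary), which is the recursion of the partition function obtained by splitting paths
according to their last step.
-/

/-- The geometric RSK local move `l_{ij}` acting on an array of positive reals
(1-based indexing).  For `i,j ≥ 2` it replaces the 2×2 submatrix
`(a b; c d)` with corners `(i-1,j-1)` and `(i,j)` by
`(bc/(a(b+c)), b; c, d(b+c))`; the boundary moves `l_{i1}`, `l_{1j}` multiply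
`x_{i1}` by `x_{i-1,1}` and `x_{1j}` by `x_{1,j-1}`, and `l_{11}` is the identity. -/
noncomputable def lmove (i j : ℕ) (X : ℕ → ℕ → ℝ) : ℕ → ℕ → ℝ :=
  if i = 1 ∧ j = 1 then X
  else if i = 1 then
    fun p q => if p = 1 ∧ q = j then X 1 (j - 1) * X 1 j else X p q
  else if j = 1 then
    fun p q => if p = i ∧ q = 1 then X (i - 1) 1 * X i 1 else X p q
  else
    fun p q =>
      if p = i - 1 ∧ q = j - 1 then
        X (i - 1) j * X i (j - 1) /
          (X (i - 1) (j - 1) * (X (i - 1) j + X i (j - 1)))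
      else if p = i ∧ q = j then X i j * (X (i - 1) j + X i (j - 1))
      else X p q

/-- `π^j_i = l_{ij} ∘ ⋯ ∘ l_{i1}`. -/
noncomputable def piMove (i j : ℕ) (X : ℕ → ℕ → ℝ) : ℕ → ℕ → ℝ :=
  (List.range j).foldl (fun Y k => lmove i (k + 1) Y) X

/-- `R_i = π^{m-i+1}_1 ∘ ⋯ ∘ π^m_i` (for `i ≤ m`), resp.
`R_i = π^1_{i-m+1} ∘ ⋯ ∘ π^m_i` (for `i ≥ m`): insertion of the `i`-th row of an
array with `m` columns. -/
noncomputable def Rmove (m i : ℕ) (X : ℕ → ℕ → ℝ) : ℕ → ℕ → ℝ :=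
  (List.range (min i m)).foldl (fun Y k => piMove (i - k) (m - k) Y) X

/-- gRSK on an `n × m` array: `gRSK = R_n ∘ ⋯ ∘ R_1`. -/
noncomputable def gRSK (n m : ℕ) (X : ℕ → ℕ → ℝ) : ℕ → ℕ → ℝ :=
  (List.range n).foldl (fun Y k => Rmove m (k + 1) Y) X

/-- `ρ^i_j = l_{1,j-i+1} ∘ ⋯ ∘ l_{i-1,j-1} ∘ l_{ij}` for `i ≤ j`, resp.
`ρ^i_j = l_{i-j+1,1} ∘ ⋯ ∘ l_{i-1,j-1} ∘ l_{ij}` for `i ≥ j`. -/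
noncomputable def rhoMove (i j : ℕ) (X : ℕ → ℕ → ℝ) : ℕ → ℕ → ℝ :=
  (List.range (min i j)).foldl (fun Y k => lmove (i - k) (j - k) Y) X

/-- One time step of geometric PNG: `ρ^1_t ∘ ⋯ ∘ ρ^t_1`. -/
noncomputable def pngStage (t : ℕ) (X : ℕ → ℕ → ℝ) : ℕ → ℕ → ℝ :=
  (List.range t).foldl (fun Y k => rhoMove (t - k) (1 + k) Y) X

/-- Geometric PNG on the triangular array `(w_{ij} : i+j-1 ≤ n)`:
`gPNG = (ρ^1_n ∘ ⋯ ∘ ρ^n_1) ∘ ⋯ ∘ (ρ^1_2 ∘ ρ^2_1) ∘ ρ^1_1`. -/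
noncomputable def gPNG (n : ℕ) (X : ℕ → ℕ → ℝ) : ℕ → ℕ → ℝ :=
  (List.range n).foldl (fun Y t => pngStage (t + 1) Y) X

/-- The weight of the down-right lattice path from `(1,1)` to `(p,q)` encoded by
the sequence of steps `s` (`true` = down, i.e. increase the first index): the
product of the entries of `w` along the path. -/
noncomputable def pathWeight (w : ℕ → ℕ → ℝ) (p q : ℕ) (s : Fin (p + q - 2) → Bool) : ℝ :=
  ∏ k ∈ Finset.range (p + q - 1),
    w (1 + ((List.ofFn s).take k).count true)
      (1 + (k - ((List.ofFn s).take k).count true))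

/-- The point-to-point polymer partition function
`Z_{p,q} = Σ_{π : (1,1) → (p,q) down-right} Π_{(i,j) ∈ π} w_{ij}`,
the sum running over all down-right lattice paths from `(1,1)` to `(p,q)`. -/
noncomputable def partitionFn (w : ℕ → ℕ → ℝ) (p q : ℕ) : ℝ :=
  ∑ s ∈ Finset.univ.filter
      (fun s : Fin (p + q - 2) → Bool => (List.ofFn s).count true = p - 1),
    pathWeight w p q s

open Finset

section PathSum

variable (w : ℕ → ℕ → ℝ)

noncomputable def stepsWeight (l : List Bool) : ℝ :=
  ∏ k ∈ range (l.length + 1),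
    w (1 + (l.take k).count true) (1 + (k - (l.take k).count true))

noncomputable def pathSum (N a : ℕ) : ℝ :=
  ∑ s ∈ univ.filter (fun s : Fin N → Bool => (List.ofFn s).count true = a),
    stepsWeight w (List.ofFn s)

lemma partitionFn_eq_pathSum {p q : ℕ} (h : 2 ≤ p + q) :
    partitionFn w p q = pathSum w (p + q - 2) (p - 1) := by
  unfold partitionFn pathWeight pathSum stepsWeight
  refine sum_congr rfl fun s _ => ?_
  rw [List.length_ofFn, show p + q - 1 = p + q - 2 + 1 by omega]

lemma stepsWeight_append_singleton (l : List Bool) (c : Bool) :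
    stepsWeight w (l ++ [c]) = stepsWeight w l *
      w (1 + (l ++ [c]).count true) (1 + (l.length + 1 - (l ++ [c]).count true)) := by
  unfold stepsWeight
  rw [List.length_append, List.length_singleton, prod_range_succ, List.take_of_length_le (by simp)]
  congr 1
  refine prod_congr rfl fun k hk => ?_
  rw [List.take_append_of_le_length (by simpa [Nat.lt_succ_iff] using hk)]

lemma sum_tuple_eq_sum_snoc {N : ℕ} {α M : Type*} [Fintype α] [AddCommMonoid M]
    (f : (Fin (N + 1) → α) → M) : ∑ s, f s = ∑ t : Fin N → α, ∑ c, f (Fin.snoc t c) := by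
  rw [← (Fin.snocEquiv fun _ => α).sum_comp, Fintype.sum_prod_type, sum_comm]
  rfl

lemma pathSum_succ (N a : ℕ) :
    pathSum w (N + 1) a = ∑ t : Fin N → Bool,
      ((if (List.ofFn t).count true + 1 = a then stepsWeight w (List.ofFn t ++ [true]) else 0) +
        if (List.ofFn t).count true = a then stepsWeight w (List.ofFn t ++ [false]) else 0) := by
  rw [pathSum, sum_filter, sum_tuple_eq_sum_snoc]
  simp only [Fintype.sum_bool, List.ofFn_succ', Fin.snoc_castSucc, Fin.snoc_last,
    List.concat_eq_append, List.count_append]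
  rfl

lemma pathSum_zero_zero : pathSum w 0 0 = w 1 1 := by
  simp [pathSum, stepsWeight]

lemma pathSum_eq_zero_of_lt {N a : ℕ} (h : N < a) : pathSum w N a = 0 := by
  refine sum_eq_zero fun s hs => absurd (mem_filter.1 hs).2 ?_
  have := (List.ofFn s).count_le_length (a := true)
  rw [List.length_ofFn] at this
  omega

lemma pathSum_succ_zero (N : ℕ) : pathSum w (N + 1) 0 = pathSum w N 0 * w 1 (N + 2) := by
  rw [pathSum_succ, pathSum, sum_filter, sum_mul]
  simp only [Nat.add_one_ne_zero, if_false, zero_add, ite_mul, zero_mul]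
  refine sum_congr rfl fun t _ => ?_
  split_ifs with h
  · rw [stepsWeight_append_singleton, List.count_append, h, List.length_ofFn]
    congr 2
    simp
    omega
  · rfl

lemma pathSum_succ_succ (N a : ℕ) :
    pathSum w (N + 1) (a + 1) =
      (pathSum w N a + pathSum w N (a + 1)) * w (a + 2) (1 + (N - a)) := by
  rw [pathSum_succ, pathSum, pathSum, sum_filter, sum_filter, ← sum_add_distrib, sum_mul]
  refine sum_congr rfl fun t _ => ?_
  rw [add_mul, ite_mul, ite_mul, zero_mul]
  simp only [Nat.add_right_cancel_iff]
  congr 1 <;> split_ifs with h <;>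
    simp only [stepsWeight_append_singleton, List.count_append, h, List.length_ofFn,
      List.count_singleton_self, show [false].count true = 0 from rfl] <;>
    congr 2 <;> omega

lemma partitionFn_one_one : partitionFn w 1 1 = w 1 1 := by
  rw [partitionFn_eq_pathSum w le_rfl]
  exact pathSum_zero_zero w

lemma partitionFn_one_left {q : ℕ} (hq : 2 ≤ q) :
    partitionFn w 1 q = partitionFn w 1 (q - 1) * w 1 q := by
  obtain ⟨m, rfl⟩ : ∃ m, q = m + 2 := ⟨q - 2, by omega⟩
  rw [partitionFn_eq_pathSum w (by omega), partitionFn_eq_pathSum w (by omega),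
    show 1 + (m + 2) - 2 = m + 1 by omega, show 1 + (m + 2 - 1) - 2 = m by omega]
  exact pathSum_succ_zero w m

lemma partitionFn_one_right {p : ℕ} (hp : 2 ≤ p) :
    partitionFn w p 1 = partitionFn w (p - 1) 1 * w p 1 := by
  obtain ⟨m, rfl⟩ : ∃ m, p = m + 2 := ⟨p - 2, by omega⟩
  rw [partitionFn_eq_pathSum w (by omega), partitionFn_eq_pathSum w (by omega),
    show m + 2 + 1 - 2 = m + 1 by omega, show m + 2 - 1 + 1 - 2 = m by omega,
    show m + 2 - 1 - 1 = m by omega, show m + 2 - 1 = m + 1 by omega, pathSum_succ_succ,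
    pathSum_eq_zero_of_lt w (Nat.lt_succ_self m), add_zero, Nat.sub_self]

lemma partitionFn_of_two_le {p q : ℕ} (hp : 2 ≤ p) (hq : 2 ≤ q) :
    partitionFn w p q = w p q * (partitionFn w (p - 1) q + partitionFn w p (q - 1)) := by
  obtain ⟨a, rfl⟩ : ∃ a, p = a + 2 := ⟨p - 2, by omega⟩
  obtain ⟨b, rfl⟩ : ∃ b, q = b + 2 := ⟨q - 2, by omega⟩
  rw [partitionFn_eq_pathSum w (by omega), partitionFn_eq_pathSum w (by omega),
    partitionFn_eq_pathSum w (by omega), show a + 2 + (b + 2) - 2 = a + b + 1 + 1 by omega,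
    show a + 2 - 1 = a + 1 by omega, pathSum_succ_succ, mul_comm,
    show a + 1 + (b + 2) - 2 = a + b + 1 by omega,
    show a + 2 + (b + 2 - 1) - 2 = a + b + 1 by omega,
    show 1 + (a + b + 1 - a) = b + 2 by omega, show a + 1 - 1 = a by omega]

end PathSum

lemma List.apply_foldl_of_forall_mem {α β γ : Type*} (f : β → γ) (g : β → α → β) (l : List α)
    (h : ∀ a ∈ l, ∀ b, f (g b a) = f b) (b : β) : f (l.foldl g b) = f b := by
  induction l generalizing b with
  | nil => rfl
  | cons a l ih =>
    rw [List.foldl_cons, ih (fun a' ha' => h a' (List.mem_cons_of_mem a ha')),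
      h a List.mem_cons_self]

section LocalMoves

variable (X Y : ℕ → ℕ → ℝ)

lemma lmove_apply_of_ne {i j p q : ℕ} (h₀ : ¬(p = i ∧ q = j)) (h₁ : ¬(p = i - 1 ∧ q = j - 1)) :
    lmove i j X p q = X p q := by
  unfold lmove
  split_ifs with h₂ h₃ h₄
  · rfl
  · subst h₃
    simp only [if_neg h₀]
  · subst h₄
    simp only [if_neg h₀]
  · simp only [if_neg h₀, if_neg h₁]

lemma lmove_one_one : lmove 1 1 X = X := by
  simp [lmove]

lemma lmove_one_left_apply_self {j : ℕ} (hj : 2 ≤ j) :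
    lmove 1 j X 1 j = X 1 (j - 1) * X 1 j := by
  simp [lmove, show j ≠ 1 by omega]

lemma lmove_one_right_apply_self {i : ℕ} (hi : 2 ≤ i) :
    lmove i 1 X i 1 = X (i - 1) 1 * X i 1 := by
  simp [lmove, show i ≠ 1 by omega]

lemma lmove_apply_self {i j : ℕ} (hi : 2 ≤ i) (hj : 2 ≤ j) :
    lmove i j X i j = X i j * (X (i - 1) j + X i (j - 1)) := by
  simp [lmove, show i ≠ 1 by omega, show j ≠ 1 by omega, show i ≠ i - 1 by omega]

lemma lmove_apply_self_congr {i j : ℕ} (h₀ : Y i j = X i j) (h₁ : Y (i - 1) j = X (i - 1) j)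
    (h₂ : Y i (j - 1) = X i (j - 1)) : lmove i j Y i j = lmove i j X i j := by
  unfold lmove
  split_ifs with h₃ h₄ h₅
  · exact h₀
  · subst h₄
    simp only [and_self, if_true, h₀, h₂]
  · subst h₅
    simp only [and_self, if_true, h₀, h₁]
  · simp only [h₀, h₁, h₂]
    split_ifs with h₆
    · obtain ⟨rfl, rfl⟩ : i = 0 ∧ j = 0 := by omega
      rw [h₀]
    all_goals rfl

end LocalMoves

section Stages

variable (X : ℕ → ℕ → ℝ)

lemma rhoMove_apply_of_forall_ne {i j p q : ℕ}
    (h : ∀ k < min i j, ¬(p = i - k ∧ q = j - k) ∧ ¬(p = i - k - 1 ∧ q = j - k - 1)) :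
    rhoMove i j X p q = X p q :=
  List.apply_foldl_of_forall_mem (· p q) _ _
    (fun k hk Y => lmove_apply_of_ne Y (h k (List.mem_range.1 hk)).1 (h k (List.mem_range.1 hk)).2)
    X

lemma rhoMove_apply_self {i j : ℕ} (hi : 1 ≤ i) (hj : 1 ≤ j) :
    rhoMove i j X i j = lmove i j X i j := by
  obtain ⟨m, hm⟩ : ∃ m, min i j = m + 1 := ⟨min i j - 1, by omega⟩
  rw [rhoMove, hm, List.range_succ_eq_map, List.foldl_cons, List.foldl_map, Nat.sub_zero,
    Nat.sub_zero]
  refine List.apply_foldl_of_forall_mem (fun Y : ℕ → ℕ → ℝ => Y i j) _ _ (fun k hk Y => ?_) _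
  exact lmove_apply_of_ne Y (by omega) (by simp at hk; omega)

lemma pngStage_apply_of_lt {t p q : ℕ} (h : t + 1 < p + q) : pngStage t X p q = X p q :=
  List.apply_foldl_of_forall_mem (· p q) _ _
    (fun k _ Y => rhoMove_apply_of_forall_ne Y fun l _ => by omega) X

lemma pngStage_apply_antidiag {t p q : ℕ} (hp : 1 ≤ p) (hq : 1 ≤ q) (h : p + q = t + 1) :
    pngStage t X p q = lmove p q X p q := by
  have hsplit :
      List.range t = List.range (q - 1) ++ [q - 1] ++ (List.range (t - q)).map (q + ·) := by
    rw [← List.range_succ, show (q - 1).succ = q by omega, ← List.range_add,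
      Nat.add_sub_cancel' (by omega)]
  rw [pngStage, hsplit, List.foldl_append, List.foldl_append, List.foldl_cons, List.foldl_nil]
  set Y := (List.range (q - 1)).foldl (fun Y k => rhoMove (t - k) (1 + k) Y) X
  have hY : ∀ a b, (a + b) % 2 ≠ (t + 1) % 2 ∨ (a + b = t + 1 ∧ q ≤ b) → Y a b = X a b :=
    fun a b hab => List.apply_foldl_of_forall_mem (· a b) _ _
      (fun k hk Z => rhoMove_apply_of_forall_ne Z fun l _ => by simp at hk; omega) X
  rw [List.apply_foldl_of_forall_mem (· p q) _ _ (fun k hk Z => rhoMove_apply_of_forall_ne Z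
      fun l _ => by simp at hk; omega),
    show t - (q - 1) = p by omega, show 1 + (q - 1) = q by omega, rhoMove_apply_self Y hp hq]
  exact lmove_apply_self_congr X Y (hY p q (by omega)) (hY (p - 1) q (by omega))
    (hY p (q - 1) (by omega))

end Stages

lemma gPNG_succ (n : ℕ) (X : ℕ → ℕ → ℝ) : gPNG (n + 1) X = pngStage (n + 1) (gPNG n X) := by
  rw [gPNG, List.range_succ, List.foldl_append]
  rfl

lemma gPNG_apply_of_lt (X : ℕ → ℕ → ℝ) {n p q : ℕ} (h : n + 1 < p + q) : gPNG n X p q = X p q :=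
  List.apply_foldl_of_forall_mem (· p q) _ _
    (fun t ht Y => pngStage_apply_of_lt Y (by simp at ht; omega)) X

theorem gPNG_antidiagonal_eq_partitionFn_general (n : ℕ) (W : ℕ → ℕ → ℝ) :
    ∀ i j, 1 ≤ i → 1 ≤ j → i + j = n + 1 →
      gPNG n W i j = partitionFn W i j := by
  induction n with
  | zero => intro i j hi hj hij; omega
  | succ n ih =>
    intro i j hi hj hij
    rw [gPNG_succ, pngStage_apply_antidiag _ hi hj hij]
    rcases hi.eq_or_lt with rfl | hi <;> rcases hj.eq_or_lt with rfl | hj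
    · obtain rfl : n = 0 := by omega
      rw [lmove_one_one, partitionFn_one_one]
      rfl
    · rw [lmove_one_left_apply_self _ hj, ih 1 (j - 1) le_rfl (by omega) (by omega),
        gPNG_apply_of_lt W (by omega), partitionFn_one_left W hj]
    · rw [lmove_one_right_apply_self _ hi, ih (i - 1) 1 (by omega) le_rfl (by omega),
        gPNG_apply_of_lt W (by omega), partitionFn_one_right W hi]
    · rw [lmove_apply_self _ hi hj, gPNG_apply_of_lt W (by omega),
        ih (i - 1) j (by omega) hj.le (by omega), ih i (j - 1) hi.le (by omega) (by omega),
        partitionFn_of_two_le W hi hj]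

/-- For a positive triangular input array `W = (w_{ij} : i+j-1 ≤ n)`, the
anti-diagonal entries of the geometric PNG output `H = gPNG(W)` are the
point-to-point polymer partition functions: for `i + j = n + 1`,
`h_{ij} = Σ_{π ∈ Π_{ij}} Π_{(k,l) ∈ π} w_{kl}`. -/
theorem gPNG_antidiagonal_eq_partitionFn (n : ℕ) (W : ℕ → ℕ → ℝ)
    (hW : ∀ i j, 1 ≤ i → 1 ≤ j → i + j - 1 ≤ n → 0 < W i j) :
    ∀ i j, 1 ≤ i → 1 ≤ j → i + j = n + 1 →
      gPNG n W i j = partitionFn W i j :=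
  gPNG_antidiagonal_eq_partitionFn_general n W
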